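/- arXiv:0804.0583 — 2 statements merged into one kernel-verified Lean document; each statement's English description precedes it below -/
import Mathlib

section
/- A real Banach space (X,‖·‖) has the Mazur intersection property if and only if the set of weak*-denting points of the closed unit ball B_{X*} of X* is norm dense in the unit sphere S_{X*} of X*. -/
/-- A Banach space has the Mazur intersection property if every nonempty bounded
closed convex set is an intersection of closed balls. -/
def HasMIP (X : Type*) [NormedAddCommGroup X] [NormedSpace ℝ X] : Prop :=
  ∀ K : Set X, K.Nonempty → Bornology.IsBounded K → IsClosed K → Convex ℝ K →
    ∃ B : Set (X × ℝ), K = ⋂ p ∈ B, Metric.closedBall p.1 p.2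

/-!
Necessity: given a norm-one `f` and a small `τ > 0`, pick `e` with `f e = 1`, `‖e‖ ≤ 1 + τ`.
The Mazur property gives a ball containing the flange `e + (ker f ∩ B_X)` but not `(1 + τ) e`;
the norming functional of the direction from its centre to `(1 + τ) e` cuts out a w*-slice
whose members all separate the flange from `(1 + τ) e`, hence lie within `13 τ` of `f`.
Baire's theorem on the complete sphere `S_{X*}` turns "small slices near every point" into
"w*-denting points near every point".

Sufficiency: separate `y ∉ K` from `K` by a norm-one `f` and move to a nearby w*-denting `g`
with a small slice `S(x, l)`. For large `c`, the norming functionals of all `k + c x`, `k ∈ K`,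
lie in that slice, so they act on `K` almost like `g`; the ball around `-c x` of radius
`sup_K g + (small) + c ‖x‖` then contains `K` but not `y`.
-/

open Metric

theorem IsClosed.subset_closure_inter_iInter {E : Type*} [PseudoMetricSpace E] [CompleteSpace E]
    {S : Set E} (hS : IsClosed S) {U : ℕ → Set E} (hU : ∀ n, IsOpen (U n))
    (hSU : ∀ n, S ⊆ closure (S ∩ U n)) : S ⊆ closure (S ∩ ⋂ n, U n) := by
  have : CompleteSpace S := hS.completeSpace_coe
  have hdense : Dense (⋂ n, ((↑) ⁻¹' U n : Set S)) :=
    dense_iInter_of_isOpen (fun n => (hU n).preimage continuous_subtype_val)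
      fun n => Subtype.dense_iff.mpr (by rw [Subtype.image_preimage_coe]; exact hSU n)
  rw [← Set.preimage_iInter, Subtype.dense_iff, Subtype.image_preimage_coe] at hdense
  exact hdense

namespace StrongDual

variable {X : Type*} [NormedAddCommGroup X] [NormedSpace ℝ X]

theorem apply_le_norm_mul (h : StrongDual ℝ X) (z : X) : h z ≤ ‖h‖ * ‖z‖ :=
  (le_abs_self _).trans (h.le_opNorm z)

theorem apply_le_norm_of_norm_le_one {h : StrongDual ℝ X} (hh : ‖h‖ ≤ 1) (z : X) : h z ≤ ‖z‖ :=
  (h.apply_le_norm_mul z).trans (mul_le_of_le_one_left (norm_nonneg z) hh)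

theorem abs_apply_sub_apply_le {g h : StrongDual ℝ X} {ε M : ℝ} {z : X} (hgh : dist h g ≤ ε)
    (hz : ‖z‖ ≤ M) : |h z - g z| ≤ ε * M :=
  calc |h z - g z| = ‖(h - g) z‖ := rfl
    _ ≤ ‖h - g‖ * ‖z‖ := (h - g).le_opNorm z
    _ ≤ ε * M := mul_le_mul (dist_eq_norm h g ▸ hgh) hz (norm_nonneg z) (dist_nonneg.trans hgh)

theorem exists_apply_eq_one_norm_le {f : StrongDual ℝ X} (hf : ‖f‖ = 1) {η : ℝ} (hη : 0 < η) :
    ∃ e : X, f e = 1 ∧ ‖e‖ ≤ 1 + η := by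
  obtain ⟨x, hx, hfx⟩ := f.exists_lt_apply_of_lt_opNorm (r := (1 + η)⁻¹) (by
    rw [hf]; exact inv_lt_one_of_one_lt₀ (by linarith))
  have hfx0 : 0 < ‖f x‖ := lt_trans (by positivity) hfx
  refine ⟨(f x)⁻¹ • x, by simp [norm_pos_iff.mp hfx0], ?_⟩
  rw [norm_smul, norm_inv, inv_mul_le_iff₀ hfx0]
  calc ‖x‖ ≤ 1 := hx.le
    _ ≤ ‖f x‖ * (1 + η) := by
      rw [inv_lt_iff_one_lt_mul₀ (by linarith)] at hfx; linarith

end StrongDual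

section Slices

variable {X : Type*} [NormedAddCommGroup X] [NormedSpace ℝ X]

def weakStarSlice (x : X) (l : ℝ) : Set (StrongDual ℝ X) := {h | ‖h‖ ≤ 1 ∧ l < h x}

variable (X) in
def weakStarDentingPoints : Set (StrongDual ℝ X) :=
  {g | ‖g‖ ≤ 1 ∧ ∀ ε : ℝ, 0 < ε → ∃ (x : X) (l : ℝ), l < g x ∧ diam (weakStarSlice x l) < ε}

theorem isBounded_weakStarSlice (x : X) (l : ℝ) : Bornology.IsBounded (weakStarSlice x l) :=
  isBounded_closedBall.subset fun _ hh => mem_closedBall_zero_iff.mpr hh.1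

theorem dist_lt_of_mem_weakStarSlice {x : X} {l ε : ℝ} {g h : StrongDual ℝ X}
    (hh : h ∈ weakStarSlice x l) (hg : g ∈ weakStarSlice x l)
    (hdiam : diam (weakStarSlice x l) < ε) : dist h g < ε :=
  (dist_le_diam_of_mem (isBounded_weakStarSlice x l) hh hg).trans_lt hdiam

theorem isOpen_setOf_exists_diam_weakStarSlice_lt (ε : ℝ) :
    IsOpen {g : StrongDual ℝ X | ∃ (x : X) (l : ℝ), l < g x ∧ diam (weakStarSlice x l) < ε} := by
  refine isOpen_iff_forall_mem_open.mpr fun g ⟨x, l, hgx, hdiam⟩ =>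
    ⟨{g' | l < g' x}, fun g' hg' => ⟨x, l, hg', hdiam⟩, ?_, hgx⟩
  exact isOpen_lt continuous_const (continuous_eval_const x)

end Slices

section Sufficiency

variable {X : Type*} [NormedAddCommGroup X] [NormedSpace ℝ X]

open StrongDual

theorem geometric_hahn_banach_closed_point_norm_eq_one {K : Set X} {y : X} (hne : K.Nonempty)
    (hconv : Convex ℝ K) (hcl : IsClosed K) (hy : y ∉ K) :
    ∃ f : StrongDual ℝ X, ‖f‖ = 1 ∧ ∃ s, (∀ k ∈ K, f k ≤ s) ∧ s < f y := by
  obtain ⟨f, s, hK, hs⟩ := geometric_hahn_banach_closed_point hconv hcl hy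
  obtain ⟨k, hk⟩ := hne
  have hf : 0 < ‖f‖ := norm_pos_iff.mpr <| by
    rintro rfl
    exact (hK k hk).not_ge hs.le
  refine ⟨‖f‖⁻¹ • f, by simp [norm_smul, hf.ne'], ‖f‖⁻¹ * s, fun k hk => ?_, ?_⟩
  · simpa using mul_le_mul_of_nonneg_left (hK k hk).le (inv_nonneg.mpr hf.le)
  · simpa using mul_lt_mul_of_pos_left hs (inv_pos.mpr hf)

theorem hasMIP_iff_exists_closedBall :
    HasMIP X ↔ ∀ K : Set X, K.Nonempty → Bornology.IsBounded K → IsClosed K → Convex ℝ K →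
      ∀ y ∉ K, ∃ (c : X) (ρ : ℝ), K ⊆ closedBall c ρ ∧ y ∉ closedBall c ρ := by
  refine forall_congr' fun K => imp_congr_right fun _ => imp_congr_right fun _ =>
    imp_congr_right fun _ => imp_congr_right fun _ => ⟨?_, fun hsep => ?_⟩
  · rintro ⟨B, rfl⟩ y hy
    obtain ⟨p, hpB, hyp⟩ : ∃ p ∈ B, y ∉ closedBall p.1 p.2 := by simpa using hy
    exact ⟨p.1, p.2, Set.biInter_subset_of_mem hpB, hyp⟩
  · refine ⟨{p | K ⊆ closedBall p.1 p.2},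
      Set.Subset.antisymm (Set.subset_iInter₂ fun p hp => hp) fun y hy => ?_⟩
    by_contra hyK
    obtain ⟨c, ρ, hK, hyc⟩ := hsep y hyK
    exact hyc (Set.mem_iInter₂.mp hy (c, ρ) hK)

theorem mem_weakStarSlice_of_apply_eq_norm {x k : X} {l M c : ℝ} {h : StrongDual ℝ X}
    (hk : ‖k‖ ≤ M) (hc : 0 < c) (hcM : 2 * M < c * (‖x‖ - l)) (hh : ‖h‖ ≤ 1)
    (hnorm : h (k + c • x) = ‖k + c • x‖) : h ∈ weakStarSlice x l := by
  refine ⟨hh, lt_of_mul_lt_mul_left ?_ hc.le⟩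
  have hhk : h k ≤ ‖k‖ := apply_le_norm_of_norm_le_one hh k
  have hcx : c * ‖x‖ ≤ ‖k + c • x‖ + ‖k‖ :=
    calc c * ‖x‖ = ‖(k + c • x) - k‖ := by simp [norm_smul, abs_of_pos hc]
      _ ≤ ‖k + c • x‖ + ‖k‖ := norm_sub_le _ _
  rw [map_add, map_smul, smul_eq_mul] at hnorm
  linarith

theorem exists_closedBall_separating_of_mem_weakStarSlice {K : Set X} {x y : X}
    {g : StrongDual ℝ X} {l ε M s : ℝ} (hg : g ∈ weakStarSlice x l)
    (hdiam : diam (weakStarSlice x l) < ε) (hK : ∀ k ∈ K, ‖k‖ ≤ M ∧ g k ≤ s) (hy : ‖y‖ ≤ M)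
    (hgy : s + 2 * (ε * M) < g y) :
    ∃ (c : X) (ρ : ℝ), K ⊆ closedBall c ρ ∧ y ∉ closedBall c ρ := by
  have hM : 0 ≤ M := (norm_nonneg y).trans hy
  have hlx : 0 < ‖x‖ - l := sub_pos.mpr (hg.2.trans_le (apply_le_norm_of_norm_le_one hg.1 x))
  set c := 2 * M / (‖x‖ - l) + 1
  have hc : 0 < c := by positivity
  have hcM : 2 * M < c * (‖x‖ - l) := by
    rw [add_mul, div_mul_cancel₀ _ hlx.ne']; linarith
  refine ⟨-(c • x), s + ε * M + c * ‖x‖, fun k hk => ?_, ?_⟩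
  · obtain ⟨hkM, hgk⟩ := hK k hk
    rw [mem_closedBall, dist_eq_norm, sub_neg_eq_add]
    obtain ⟨h, hh, hhk⟩ : ∃ h : StrongDual ℝ X, ‖h‖ ≤ 1 ∧ h (k + c • x) = ‖k + c • x‖ :=
      exists_dual_vector'' ℝ _
    have hhS := mem_weakStarSlice_of_apply_eq_norm hkM hc hcM hh hhk
    have hhg := abs_apply_sub_apply_le (dist_lt_of_mem_weakStarSlice hhS hg hdiam).le hkM
    have hhx := mul_le_mul_of_nonneg_left (apply_le_norm_of_norm_le_one hh x) hc.le
    calc ‖k + c • x‖ = h k + c * h x := by rw [← hhk, map_add, map_smul, smul_eq_mul]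
      _ ≤ s + ε * M + c * ‖x‖ := by linarith [(abs_le.mp hhg).2]
  · rw [mem_closedBall, dist_eq_norm, sub_neg_eq_add, not_le]
    obtain ⟨F, hF, hFx⟩ : ∃ F : StrongDual ℝ X, ‖F‖ ≤ 1 ∧ F x = ‖x‖ := exists_dual_vector'' ℝ x
    have hFS : F ∈ weakStarSlice x l := ⟨hF, by simp only [hFx]; linarith⟩
    have hFg := abs_apply_sub_apply_le (dist_lt_of_mem_weakStarSlice hFS hg hdiam).le hy
    calc s + ε * M + c * ‖x‖ < F y + c * F x := by simp only [hFx]; linarith [(abs_le.mp hFg).1]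
      _ = F (y + c • x) := by rw [map_add, map_smul, smul_eq_mul]
      _ ≤ ‖y + c • x‖ := apply_le_norm_of_norm_le_one hF _

theorem hasMIP_of_forall_mem_closure_weakStarDentingPoints
    (hD : ∀ f : StrongDual ℝ X, ‖f‖ = 1 → f ∈ closure (weakStarDentingPoints X)) : HasMIP X := by
  refine hasMIP_iff_exists_closedBall.mpr fun K hne hbdd hcl hconv y hy => ?_
  obtain ⟨f, hf, s, hfK, hfy⟩ := geometric_hahn_banach_closed_point_norm_eq_one hne hconv hcl hy
  obtain ⟨M, hM⟩ := (hbdd.insert y).subset_closedBall 0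
  have hnorm : ∀ z ∈ insert y K, ‖z‖ ≤ M := fun z hz => mem_closedBall_zero_iff.mp (hM hz)
  have hM0 : 0 ≤ M := (norm_nonneg y).trans (hnorm y (.inl rfl))
  set ε := (f y - s) / (4 * (M + 1))
  have hε : 0 < ε := div_pos (sub_pos.mpr hfy) (by positivity)
  -- `ε` is chosen so that `4 ε M < f y - s`.
  have hεM : ε * (4 * (M + 1)) = f y - s := div_mul_cancel₀ _ (by positivity)
  obtain ⟨g, ⟨hg, hdent⟩, hfg⟩ := mem_closure_iff.mp (hD f hf) ε hε
  obtain ⟨x, l, hgx, hdiam⟩ := hdent ε hε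
  have hgf : dist g f ≤ ε := (dist_comm g f).trans_le hfg.le
  refine exists_closedBall_separating_of_mem_weakStarSlice (s := s + ε * M) ⟨hg, hgx⟩ hdiam
    (fun k hk => ⟨hnorm k (.inr hk), ?_⟩) (hnorm y (.inl rfl)) ?_
  · linarith [hfK k hk, (abs_le.mp (abs_apply_sub_apply_le hgf (hnorm k (.inr hk)))).2]
  · linarith [(abs_le.mp (abs_apply_sub_apply_le hgf (hnorm y (.inl rfl)))).1]

end Sufficiency

section Necessity

variable {X : Type*} [NormedAddCommGroup X] [NormedSpace ℝ X]

open StrongDual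

theorem exists_weakStarSlice_of_notMem_closedBall {c x₀ : X} {r κ : ℝ} (hr : 0 ≤ r)
    (hx₀ : x₀ ∉ closedBall c r) (hκ : 0 < κ) :
    ∃ (x : X) (l : ℝ), (∃ g : StrongDual ℝ X, ‖g‖ = 1 ∧ l < g x) ∧
      ∀ h ∈ weakStarSlice x l, 1 - κ < ‖h‖ ∧ ∀ k ∈ closedBall c r, h k < h x₀ := by
  rw [mem_closedBall, dist_eq_norm, not_le] at hx₀
  have hu : 0 < ‖x₀ - c‖ := hr.trans_lt hx₀
  obtain ⟨g, hg, hgu⟩ : ∃ g : StrongDual ℝ X, ‖g‖ = 1 ∧ g (x₀ - c) = ‖x₀ - c‖ :=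
    exists_dual_vector ℝ _ hu.ne'
  refine ⟨x₀ - c, max r ((1 - κ) * ‖x₀ - c‖), ⟨g, hg, ?_⟩, fun h ⟨hh, hhu⟩ => ⟨?_, fun k hk => ?_⟩⟩
  · rw [hgu]
    exact max_lt hx₀ (by nlinarith)
  · refine lt_of_mul_lt_mul_right ?_ hu.le
    exact ((le_max_right _ _).trans_lt hhu).trans_le (h.apply_le_norm_mul _)
  · have hkc : h (k - c) ≤ r :=
      (apply_le_norm_of_norm_le_one hh _).trans (mem_closedBall_iff_norm.mp hk)
    have hcx₀ := (le_max_left _ _).trans_lt hhu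
    rw [map_sub] at hkc hcx₀
    linarith

theorem abs_apply_le_of_forall_apply_le {f h : StrongDual ℝ X} {C : ℝ}
    (hC : ∀ v, f v = 0 → ‖v‖ ≤ 1 → h v ≤ C) {v : X} (hv : f v = 0) : |h v| ≤ C * ‖v‖ := by
  rcases eq_or_ne v 0 with rfl | hv0
  · simp
  have hpos : 0 < ‖v‖ := norm_pos_iff.mpr hv0
  have hunit : ‖‖v‖⁻¹ • v‖ = 1 := norm_smul_inv_norm hv0
  have h₁ := hC (‖v‖⁻¹ • v) (by simp [hv]) hunit.le
  have h₂ := hC (-(‖v‖⁻¹ • v)) (by simp [hv]) (by rw [norm_neg, hunit])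
  rw [map_smul, smul_eq_mul, inv_mul_le_iff₀ hpos] at h₁
  rw [map_neg, map_smul, smul_eq_mul, ← mul_neg, inv_mul_le_iff₀ hpos] at h₂
  rw [abs_le]
  constructor <;> linarith

theorem norm_sub_smul_le_of_abs_apply_le {f h : StrongDual ℝ X} {e : X} {C : ℝ} (hC : 0 ≤ C)
    (hfe : f e = 1) (hker : ∀ v, f v = 0 → |h v| ≤ C * ‖v‖) :
    ‖h - h e • f‖ ≤ C * (1 + ‖f‖ * ‖e‖) := by
  refine (h - h e • f).opNorm_le_bound (by positivity) fun z => ?_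
  have hv : f (z - f z • e) = 0 := by simp [hfe]
  have hfz : ‖f z • e‖ ≤ ‖f‖ * ‖e‖ * ‖z‖ := by
    rw [norm_smul, mul_right_comm]
    exact mul_le_mul_of_nonneg_right (f.le_opNorm z) (norm_nonneg e)
  calc ‖(h - h e • f) z‖ = |h (z - f z • e)| := by
        rw [Real.norm_eq_abs]; simp only [map_sub, map_smul]; simp [mul_comm]
    _ ≤ C * ‖z - f z • e‖ := hker _ hv
    _ ≤ C * (‖z‖ + ‖f‖ * ‖e‖ * ‖z‖) := by gcongr; exact (norm_sub_le _ _).trans (by linarith)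
    _ = C * (1 + ‖f‖ * ‖e‖) * ‖z‖ := by ring

-- Separation on the flange bounds `h` on `ker f`, so `h` is nearly a multiple of `f`;
-- `‖h‖ ≈ 1` pins the multiple near `1`.
theorem norm_sub_le_of_forall_apply_add_lt {f h : StrongDual ℝ X} {e : X} {τ : ℝ} (hτ : τ ≤ 1)
    (hf : ‖f‖ = 1) (hfe : f e = 1) (he : ‖e‖ ≤ 1 + τ) (hh : ‖h‖ ≤ 1) (hh' : 1 - τ < ‖h‖)
    (hsep : ∀ v, f v = 0 → ‖v‖ ≤ 1 → h (e + v) < h ((1 + τ) • e)) : ‖h - f‖ ≤ 13 * τ := by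
  have hτ0 : 0 < τ := by linarith
  have hhe : h e ≤ 1 + τ := (apply_le_norm_of_norm_le_one hh e).trans he
  have hker : ∀ v, f v = 0 → ‖v‖ ≤ 1 → h v ≤ 2 * τ := fun v hv hv1 => by
    have := hsep v hv hv1
    rw [map_add, map_smul, smul_eq_mul] at this
    nlinarith
  have hclose : ‖h - h e • f‖ ≤ 6 * τ := by
    refine (norm_sub_smul_le_of_abs_apply_le (by linarith) hfe
      fun v hv => abs_apply_le_of_forall_apply_le hker hv).trans ?_
    rw [hf, one_mul]
    nlinarith
  have hhe_pos : 0 < h e := by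
    have := hsep 0 (map_zero f) (by simp)
    rw [add_zero, map_smul, smul_eq_mul] at this
    nlinarith
  have hhe' : 1 - 7 * τ ≤ h e := by
    have := norm_le_insert' h (h e • f)
    rw [norm_smul, hf, mul_one, Real.norm_of_nonneg hhe_pos.le] at this
    linarith
  calc ‖h - f‖ = ‖(h - h e • f) + (h e - 1) • f‖ := by congr 1; module
    _ ≤ ‖h - h e • f‖ + |h e - 1| := by
        refine (norm_add_le _ _).trans_eq ?_
        rw [norm_smul, hf, mul_one, Real.norm_eq_abs]
    _ ≤ 13 * τ := by linarith [abs_le.mpr (⟨by linarith, by linarith⟩ : -(7 * τ) ≤ h e - 1 ∧ _)]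

theorem HasMIP.exists_weakStarSlice_norm_sub_le (hX : HasMIP X) {f : StrongDual ℝ X}
    (hf : ‖f‖ = 1) {τ : ℝ} (hτ : 0 < τ) (hτ1 : τ ≤ 1) :
    ∃ (x : X) (l : ℝ), (∃ g : StrongDual ℝ X, ‖g‖ = 1 ∧ l < g x) ∧
      ∀ h ∈ weakStarSlice x l, ‖h - f‖ ≤ 13 * τ := by
  obtain ⟨e, hfe, he⟩ := f.exists_apply_eq_one_norm_le hf hτ
  set K := closedBall e 1 ∩ {z | f z = 1}
  have heK : e ∈ K := ⟨mem_closedBall_self zero_le_one, hfe⟩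
  have hx₀K : (1 + τ) • e ∉ K := fun h => by
    have : (1 + τ) * f e = 1 := by simpa using h.2
    rw [hfe] at this
    linarith
  have hKb : Bornology.IsBounded K := isBounded_closedBall.subset Set.inter_subset_left
  have hKc : IsClosed K := isClosed_closedBall.inter (isClosed_eq f.continuous continuous_const)
  have hKv : Convex ℝ K := (convex_closedBall e 1).inter (convex_hyperplane f.isLinear 1)
  obtain ⟨c, r, hKr, hx₀r⟩ := hasMIP_iff_exists_closedBall.mp hX K ⟨e, heK⟩ hKb hKc hKv _ hx₀K
  obtain ⟨x, l, hg, hslice⟩ :=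
    exists_weakStarSlice_of_notMem_closedBall (dist_nonneg.trans (hKr heK)) hx₀r hτ
  refine ⟨x, l, hg, fun h hh => norm_sub_le_of_forall_apply_add_lt hτ1 hf hfe he hh.1
    (hslice h hh).1 fun v hv hv1 => (hslice h hh).2 _ (hKr ⟨?_, ?_⟩)⟩
  · simpa [mem_closedBall, dist_eq_norm] using hv1
  · simp [hfe, hv]

theorem HasMIP.exists_mem_sphere_dist_lt (hX : HasMIP X) {f : StrongDual ℝ X} (hf : ‖f‖ = 1)
    {ε δ : ℝ} (hε : 0 < ε) (hδ : 0 < δ) :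
    ∃ g : StrongDual ℝ X, ‖g‖ = 1 ∧ dist g f < δ ∧
      ∃ (x : X) (l : ℝ), l < g x ∧ diam (weakStarSlice x l) < ε := by
  obtain ⟨m, hm, hmε, hmδ, hm1⟩ : ∃ m : ℝ, 0 < m ∧ m ≤ ε ∧ m ≤ δ ∧ m ≤ 1 :=
    ⟨min (min ε δ) 1, lt_min (lt_min hε hδ) one_pos, (min_le_left _ _).trans (min_le_left _ _),
      (min_le_left _ _).trans (min_le_right _ _), min_le_right _ _⟩
  obtain ⟨x, l, ⟨g, hg, hgx⟩, hslice⟩ :=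
    hX.exists_weakStarSlice_norm_sub_le hf (by positivity : 0 < m / 30) (by linarith)
  refine ⟨g, hg, ?_, x, l, hgx, ?_⟩
  · rw [dist_eq_norm]
    exact (hslice g ⟨hg.le, hgx⟩).trans_lt (by linarith)
  · refine (diam_le_of_forall_dist_le (by positivity) fun h₁ h₁S h₂ h₂S => ?_).trans_lt
      (by linarith : 26 * (m / 30) < ε)
    calc dist h₁ h₂ ≤ dist h₁ f + dist h₂ f := dist_triangle_right _ _ _
      _ ≤ 13 * (m / 30) + 13 * (m / 30) := by
          rw [dist_eq_norm, dist_eq_norm]; exact add_le_add (hslice h₁ h₁S) (hslice h₂ h₂S)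
      _ = 26 * (m / 30) := by ring

theorem HasMIP.sphere_subset_closure_weakStarDentingPoints (hX : HasMIP X) :
    sphere (0 : StrongDual ℝ X) 1 ⊆ closure (weakStarDentingPoints X) := by
  set U : ℕ → Set (StrongDual ℝ X) := fun n =>
    {g | ∃ (x : X) (l : ℝ), l < g x ∧ diam (weakStarSlice x l) < 1 / (n + 1)}
  have hdense : ∀ n, sphere (0 : StrongDual ℝ X) 1 ⊆ closure (sphere 0 1 ∩ U n) := by
    intro n f hf
    rw [mem_sphere_zero_iff_norm] at hf
    refine Metric.mem_closure_iff.mpr fun δ hδ => ?_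
    obtain ⟨g, hg, hgf, hgU⟩ := hX.exists_mem_sphere_dist_lt hf Nat.one_div_pos_of_nat hδ
    exact ⟨g, ⟨mem_sphere_zero_iff_norm.mpr hg, hgU⟩, dist_comm f g ▸ hgf⟩
  refine (isClosed_sphere.subset_closure_inter_iInter
    (fun n => isOpen_setOf_exists_diam_weakStarSlice_lt _) hdense).trans (closure_mono ?_)
  rintro g ⟨hg, hgU⟩
  refine ⟨(mem_sphere_zero_iff_norm.mp hg).le, fun ε hε => ?_⟩
  obtain ⟨n, hn⟩ := exists_nat_one_div_lt hε
  obtain ⟨x, l, hgx, hdiam⟩ := Set.mem_iInter.mp hgU n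
  exact ⟨x, l, hgx, hdiam.trans hn⟩

end Necessity

theorem hasMIP_iff_weakStarDenting_dense_general
    (X : Type*) [NormedAddCommGroup X] [NormedSpace ℝ X] :
    HasMIP X ↔
      ∀ f : StrongDual ℝ X, ‖f‖ = 1 →
        f ∈ closure {g : StrongDual ℝ X | ‖g‖ ≤ 1 ∧
          ∀ ε : ℝ, 0 < ε → ∃ (x : X) (l : ℝ), l < g x ∧
            Metric.diam {h : StrongDual ℝ X | ‖h‖ ≤ 1 ∧ l < h x} < ε} :=
  ⟨fun hX _ hf =>
    hX.sphere_subset_closure_weakStarDentingPoints (mem_sphere_zero_iff_norm.mpr hf),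
    hasMIP_of_forall_mem_closure_weakStarDentingPoints⟩

/-- **Giles–Gregory–Sims.** A Banach space has the Mazur intersection property iff the
`w*`-denting points of `B_{X*}` are norm dense in `S_{X*}`.  Here `g ∈ B_{X*}` is a
`w*`-denting point if for every `ε > 0` there are `x ∈ X` and `λ ∈ ℝ` with `g x > λ` such
that the `w*`-slice `{h ∈ B_{X*} : h x > λ}` has norm diameter less than `ε`. -/
theorem hasMIP_iff_weakStarDenting_dense
    (X : Type*) [NormedAddCommGroup X] [NormedSpace ℝ X] [CompleteSpace X] :
    HasMIP X ↔
      ∀ f : StrongDual ℝ X, ‖f‖ = 1 →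
        f ∈ closure {g : StrongDual ℝ X | ‖g‖ ≤ 1 ∧
          ∀ ε : ℝ, 0 < ε → ∃ (x : X) (l : ℝ), l < g x ∧
            Metric.diam {h : StrongDual ℝ X | ‖h‖ ≤ 1 ∧ l < h x} < ε} :=
  hasMIP_iff_weakStarDenting_dense_general X
end

section
/- Let (X,‖·‖) be a real Banach space whose norm is Fréchet differentiable at every point of X ∖ {0}. Then (X,‖·‖) has the Mazur intersection property. -/
/-!
Separate a point `z ∉ K` from `K` by a functional `g` of norm one. Ekeland's variational
principle, applied to `x ↦ ‖x‖ - g x`, yields a point `u ≠ 0` at which the derivative `f` of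
the norm is arbitrarily close to `g`, so `f` still separates `z` from the bounded set `K`.
Fréchet differentiability at `u` means that, as `t → ∞`, the balls centred at `z + t • u`
through `z` flatten uniformly on bounded sets to the half-space `{y | f (y - z) ≥ 0}`;
shrinking their radius slightly gives a ball containing `K` but not `z`.
-/

open Metric Set Filter Topology Bornology

section Ekeland

variable {α : Type*} [MetricSpace α] {φ : α → ℝ} {ε : ℝ}

def ekelandSet (φ : α → ℝ) (ε : ℝ) (w : α) : Set α :=
  {z | φ z + ε * dist z w ≤ φ w}

theorem self_mem_ekelandSet (w : α) : w ∈ ekelandSet φ ε w := by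
  simp [ekelandSet]

theorem ekelandSet_subset (hε : 0 ≤ ε) {v w : α} (hv : v ∈ ekelandSet φ ε w) :
    ekelandSet φ ε v ⊆ ekelandSet φ ε w := fun z hz => by
  simp only [ekelandSet, mem_ofPred_eq] at hv hz ⊢
  nlinarith [dist_triangle z v w]

theorem LowerSemicontinuous.isClosed_ekelandSet (hφ : LowerSemicontinuous φ) (w : α) :
    IsClosed (ekelandSet φ ε w) :=
  (hφ.add (continuous_const.mul (continuous_id.dist continuous_const)).lowerSemicontinuous)
    |>.isClosed_preimage (φ w)

theorem exists_mem_ekelandSet_forall_le_add (hφ : BddBelow (range φ)) (w : α) {δ : ℝ}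
    (hδ : 0 < δ) :
    ∃ v ∈ ekelandSet φ ε w, ∀ z ∈ ekelandSet φ ε w, φ v ≤ φ z + δ := by
  have hne : (φ '' ekelandSet φ ε w).Nonempty :=
    ⟨φ w, mem_image_of_mem φ (self_mem_ekelandSet w)⟩
  have hbdd : BddBelow (φ '' ekelandSet φ ε w) := hφ.mono (image_subset_range _ _)
  obtain ⟨_, ⟨v, hv, rfl⟩, hlt⟩ := exists_lt_of_csInf_lt hne (lt_add_of_pos_right _ hδ)
  exact ⟨v, hv, fun z hz => by linarith [csInf_le hbdd (mem_image_of_mem φ hz)]⟩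

theorem ekelandSet_subset_closedBall (hε : 0 < ε) {v w : α} {δ : ℝ}
    (hv : v ∈ ekelandSet φ ε w) (hmin : ∀ z ∈ ekelandSet φ ε w, φ v ≤ φ z + δ) :
    ekelandSet φ ε v ⊆ closedBall v (δ / ε) := fun z hz => by
  have := hmin z (ekelandSet_subset hε.le hv hz)
  simp only [ekelandSet, mem_ofPred_eq] at hz
  rw [mem_closedBall, le_div_iff₀ hε]
  linarith

theorem LowerSemicontinuous.exists_ekeland [CompleteSpace α] (hφ : LowerSemicontinuous φ)
    (hbdd : BddBelow (range φ)) (hε : 0 < ε) (x₀ : α) :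
    ∃ y, φ y + ε * dist y x₀ ≤ φ x₀ ∧ ∀ z, φ y ≤ φ z + ε * dist z y := by
  choose next hnext_mem hnext_min using fun (n : ℕ) (w : α) =>
    exists_mem_ekelandSet_forall_le_add (ε := ε) hbdd w (pow_pos (one_half_pos (α := ℝ)) n)
  set S := ekelandSet φ ε
  let u : ℕ → α := fun n => Nat.rec (next 0 x₀) (fun n w => next (n + 1) w) n
  have hu_succ (n : ℕ) : u (n + 1) ∈ S (u n) := hnext_mem (n + 1) (u n)
  have hu_ball : ∀ n, S (u n) ⊆ closedBall (u n) ((1 / 2) ^ n / ε)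
    | 0 => ekelandSet_subset_closedBall hε (hnext_mem 0 x₀) (hnext_min 0 x₀)
    | n + 1 => ekelandSet_subset_closedBall hε (hnext_mem _ (u n)) (hnext_min _ (u n))
  have hu_mem {n m : ℕ} (hnm : n ≤ m) : u m ∈ S (u n) :=
    (antitone_nat_of_succ_le (f := S ∘ u) fun n => ekelandSet_subset hε.le (hu_succ n))
      hnm (self_mem_ekelandSet _)
  have hr : Tendsto (fun n : ℕ => (1 / 2 : ℝ) ^ n / ε) atTop (𝓝 0) := by
    simpa using (tendsto_pow_atTop_nhds_zero_of_lt_one (r := (1 / 2 : ℝ)) (by norm_num)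
      (by norm_num)).div_const ε
  have hcauchy : CauchySeq u := cauchySeq_of_le_tendsto_0' _
    (fun n m hnm => by rw [dist_comm]; exact hu_ball n (hu_mem hnm)) hr
  obtain ⟨y, hy⟩ := cauchySeq_tendsto_of_complete hcauchy
  have hyS (n : ℕ) : y ∈ S (u n) := (hφ.isClosed_ekelandSet _).mem_of_tendsto hy
    ((eventually_ge_atTop n).mono fun _ => hu_mem)
  refine ⟨y, ekelandSet_subset hε.le (hnext_mem 0 x₀) (hyS 0), fun z => ?_⟩
  by_contra! hz
  -- `z ∈ S y ⊆ S (u n)` for all `n`, and these sets shrink to `y`.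
  have hzy : dist z y ≤ 0 := by
    refine ge_of_tendsto' (by simpa only [mul_zero] using hr.const_mul 2) fun n => ?_
    have hz' := hu_ball n (ekelandSet_subset hε.le (hyS n) hz.le)
    have hy' := hu_ball n (hyS n)
    rw [mem_closedBall] at hz' hy'
    linarith [dist_triangle_right z y (u n)]
  rw [dist_le_zero.mp hzy, dist_self] at hz
  linarith

end Ekeland

section NormedSpace

variable {E : Type*} [NormedAddCommGroup E] [NormedSpace ℝ E]

theorem HasFDerivAt.opNorm_le_of_eventually_le_add {F : E → ℝ} {F' : StrongDual ℝ E} {y : E}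
    {ε : ℝ} (hF : HasFDerivAt F F' y) (hε : 0 ≤ ε) (h : ∀ᶠ z in 𝓝 y, F y ≤ F z + ε * ‖z - y‖) :
    ‖F'‖ ≤ ε := by
  refine le_of_forall_pos_le_add fun c hc => F'.opNorm_le_of_nhds_zero (by positivity) ?_
  have hlo := (hasFDerivAt_iff_isLittleO_nhds_zero.mp hF).def hc
  have hmin : ∀ᶠ w in 𝓝 (0 : E), F y ≤ F (y + w) + ε * ‖w‖ := by
    have : Tendsto (fun w => y + w) (𝓝 0) (𝓝 y) := by
      simpa using (continuous_const_add y).tendsto (0 : E)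
    simpa using this.eventually h
  have hneg : ∀ᶠ w in 𝓝 (0 : E), -F' w ≤ (ε + c) * ‖w‖ := by
    filter_upwards [hlo, hmin] with w hlo hmin
    linarith [le_abs_self (F (y + w) - F y - F' w), Real.norm_eq_abs (F (y + w) - F y - F' w)]
  have hneg' : ∀ᶠ w in 𝓝 (0 : E), -F' (-w) ≤ (ε + c) * ‖-w‖ := by
    simpa using (continuous_neg.tendsto' (0 : E) 0 neg_zero).eventually hneg
  filter_upwards [hneg, hneg'] with w h₁ h₂
  rw [map_neg, neg_neg, norm_neg] at h₂
  rw [Real.norm_eq_abs, abs_le]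
  constructor <;> linarith

theorem ContinuousLinearMap.exists_norm_lt_one_lt_apply_of_lt_opNorm (g : StrongDual ℝ E)
    {r : ℝ} (hr : r < ‖g‖) : ∃ x : E, ‖x‖ < 1 ∧ r < g x := by
  obtain ⟨x, hx, hrx⟩ := g.exists_lt_apply_of_lt_opNorm hr
  rw [Real.norm_eq_abs] at hrx
  rcases le_total 0 (g x) with hgx | hgx
  · exact ⟨x, hx, by rwa [abs_of_nonneg hgx] at hrx⟩
  · exact ⟨-x, by rwa [norm_neg], by rwa [abs_of_nonpos hgx, ← map_neg] at hrx⟩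

theorem exists_hasFDerivAt_norm_sub_le [CompleteSpace E]
    (h : ∀ x : E, x ≠ 0 → ∃ f : StrongDual ℝ E, HasFDerivAt (fun y : E => ‖y‖) f x)
    {g : StrongDual ℝ E} (hg : ‖g‖ = 1) {ε : ℝ} (hε : 0 < ε) :
    ∃ (u : E) (f : StrongDual ℝ E), HasFDerivAt (fun y : E => ‖y‖) f u ∧ ‖f - g‖ ≤ ε := by
  set φ : E → ℝ := fun x => ‖x‖ - g x
  have hφ_nonneg (x : E) : 0 ≤ φ x := by
    have := g.le_opNorm x
    rw [hg, one_mul, Real.norm_eq_abs] at this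
    linarith [le_abs_self (g x)]
  obtain ⟨x₀, hx₀, hgx₀⟩ := g.exists_norm_lt_one_lt_apply_of_lt_opNorm
    (r := max (1 - ε) 0) (by rw [hg]; exact max_lt (by linarith) one_pos)
  have hφ : Continuous φ := continuous_norm.sub g.continuous
  obtain ⟨u, hu₀, hu⟩ := hφ.lowerSemicontinuous.exists_ekeland
    ⟨0, by rintro _ ⟨x, rfl⟩; exact hφ_nonneg x⟩ hε x₀
  -- `x₀` was chosen with `φ x₀ < ε * ‖x₀‖`, which rules out `u = 0`.
  have hu_ne : u ≠ 0 := by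
    rintro rfl
    simp only [φ, dist_zero_left, norm_zero, map_zero, sub_zero, zero_add] at hu₀
    nlinarith [le_max_left (1 - ε) 0, le_max_right (1 - ε) 0, norm_nonneg x₀]
  obtain ⟨f, hf⟩ := h u hu_ne
  refine ⟨u, f, hf, (hf.sub g.hasFDerivAt).opNorm_le_of_eventually_le_add hε.le
    (Eventually.of_forall fun z => ?_)⟩
  rw [← dist_eq_norm]
  exact hu z

theorem HasFDerivAt.eventually_norm_smul_sub_le {u : E} {f : StrongDual ℝ E}
    (hf : HasFDerivAt (fun y : E => ‖y‖) f u) (M : ℝ) {c : ℝ} (hc : 0 < c) :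
    ∀ᶠ t in atTop, ∀ w : E, ‖w‖ ≤ M → ‖t • u - w‖ ≤ t * ‖u‖ - f w + c * ‖w‖ := by
  obtain ⟨ρ, hρ, hlo⟩ :=
    Metric.eventually_nhds_iff.mp ((hasFDerivAt_iff_isLittleO_nhds_zero.mp hf).def hc)
  filter_upwards [eventually_gt_atTop 0, eventually_gt_atTop (M / ρ)] with t ht htM w hw
  have hw_small : dist (-(t⁻¹ • w)) 0 < ρ := by
    rw [dist_zero_right, norm_neg, norm_smul_of_nonneg (inv_nonneg.mpr ht.le), inv_mul_lt_iff₀ ht]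
    rw [div_lt_iff₀ hρ] at htM
    linarith
  have hest := hlo hw_small
  rw [Real.norm_eq_abs, abs_le, map_neg, map_smul, smul_eq_mul, norm_neg,
    norm_smul_of_nonneg (inv_nonneg.mpr ht.le)] at hest
  calc ‖t • u - w‖ = t * ‖u + -(t⁻¹ • w)‖ := by
        rw [← norm_smul_of_nonneg ht.le, smul_add, smul_neg, smul_smul, mul_inv_cancel₀ ht.ne',
          one_smul, sub_eq_add_neg]
    _ ≤ t * (‖u‖ - t⁻¹ * f w + c * (t⁻¹ * ‖w‖)) := by gcongr; linarith
    _ = t * ‖u‖ - f w + c * ‖w‖ := by field_simp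

theorem exists_closedBall_of_hasFDerivAt_norm {u : E} {f : StrongDual ℝ E}
    (hf : HasFDerivAt (fun y : E => ‖y‖) f u) {K : Set E} (hK : IsBounded K) {z : E} {δ : ℝ}
    (hδ : 0 < δ) (hfK : ∀ y ∈ K, δ ≤ f (y - z)) :
    ∃ (c : E) (R : ℝ), K ⊆ closedBall c R ∧ z ∉ closedBall c R := by
  obtain ⟨M, hM, hKM⟩ := hK.subset_closedBall_lt 0 z
  obtain ⟨t, hball, ht⟩ := ((hf.eventually_norm_smul_sub_le M (c := δ / (2 * M))
    (by positivity)).and (eventually_gt_atTop 0)).exists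
  refine ⟨z + t • u, t * ‖u‖ - δ / 2, fun y hy => ?_, ?_⟩
  · have hyM : ‖y - z‖ ≤ M := by simpa [dist_eq_norm] using hKM hy
    have hcM : δ / (2 * M) * ‖y - z‖ ≤ δ / 2 := by
      calc δ / (2 * M) * ‖y - z‖ ≤ δ / (2 * M) * M := by gcongr
        _ = δ / 2 := by field_simp
    rw [mem_closedBall, dist_eq_norm, show y - (z + t • u) = -(t • u - (y - z)) by abel, norm_neg]
    linarith [hball (y - z) hyM, hfK y hy]
  · rw [mem_closedBall, dist_eq_norm, sub_add_cancel_left, norm_neg, norm_smul_of_nonneg ht.le,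
      not_le]
    linarith

theorem exists_closedBall_of_forall_le_apply_sub [CompleteSpace E]
    (h : ∀ x : E, x ≠ 0 → ∃ f : StrongDual ℝ E, HasFDerivAt (fun y : E => ‖y‖) f x)
    {K : Set E} (hK : IsBounded K) {g : StrongDual ℝ E} (hg : ‖g‖ = 1) {z : E} {δ : ℝ}
    (hδ : 0 < δ) (hgK : ∀ y ∈ K, δ ≤ g (y - z)) :
    ∃ (c : E) (R : ℝ), K ⊆ closedBall c R ∧ z ∉ closedBall c R := by
  obtain ⟨M, hM, hKM⟩ := hK.subset_closedBall_lt 0 z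
  obtain ⟨u, f, hf, hfg⟩ := exists_hasFDerivAt_norm_sub_le h hg (ε := δ / (2 * M)) (by positivity)
  refine exists_closedBall_of_hasFDerivAt_norm hf hK (half_pos hδ) fun y hy => ?_
  have hyM : ‖y - z‖ ≤ M := by simpa [dist_eq_norm] using hKM hy
  have hgf : g (y - z) - f (y - z) ≤ δ / 2 :=
    calc g (y - z) - f (y - z) ≤ ‖(g - f) (y - z)‖ := by
          rw [Real.norm_eq_abs, sub_apply]; exact le_abs_self _
      _ ≤ ‖g - f‖ * ‖y - z‖ := (g - f).le_opNorm _
      _ ≤ δ / (2 * M) * M := by rw [norm_sub_rev]; gcongr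
      _ = δ / 2 := by field_simp
  linarith [hgK y hy]

theorem exists_closedBall_of_notMem [CompleteSpace E]
    (h : ∀ x : E, x ≠ 0 → ∃ f : StrongDual ℝ E, HasFDerivAt (fun y : E => ‖y‖) f x)
    {K : Set E} (hne : K.Nonempty) (hb : IsBounded K) (hc : IsClosed K) (hcv : Convex ℝ K)
    {z : E} (hz : z ∉ K) : ∃ (c : E) (R : ℝ), K ⊆ closedBall c R ∧ z ∉ closedBall c R := by
  obtain ⟨g, s, hgz, hgK⟩ := geometric_hahn_banach_point_closed hcv hc hz
  have hg : 0 < ‖g‖ := by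
    obtain ⟨b, hb⟩ := hne
    refine norm_pos_iff.mpr fun hg => ?_
    have := hgK b hb
    simp only [hg, zero_apply] at hgz this
    linarith
  refine exists_closedBall_of_forall_le_apply_sub h hb (g := ‖g‖⁻¹ • g)
    (by rw [norm_smul, norm_inv, norm_norm, inv_mul_cancel₀ hg.ne'])
    (δ := ‖g‖⁻¹ * (s - g z)) (by have := sub_pos.mpr hgz; positivity) fun y hy => ?_
  rw [smul_apply, smul_eq_mul, map_sub]
  gcongr
  linarith [hgK y hy]

end NormedSpace

/-- **Mazur.** A Banach space whose norm is Fréchet differentiable away from the origin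
has the Mazur intersection property. -/
theorem hasMIP_of_frechet_differentiable_norm
    (X : Type*) [NormedAddCommGroup X] [NormedSpace ℝ X] [CompleteSpace X]
    (h : ∀ x : X, x ≠ 0 → ∃ f : StrongDual ℝ X,
      HasFDerivAt (fun y : X => ‖y‖) f x) :
    HasMIP X := by
  intro K hne hb hc hcv
  refine ⟨{p | K ⊆ closedBall p.1 p.2},
    Subset.antisymm (fun y hy => mem_iInter₂.mpr fun p hp => hp hy) fun z hz => ?_⟩
  by_contra hzK
  obtain ⟨c, R, hK, hzc⟩ := exists_closedBall_of_notMem h hne hb hc hcv hzK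
  exact hzc (mem_iInter₂.mp hz (c, R) hK)
end
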